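/- arXiv:1001.0188 — 4 statements merged into one kernel-verified Lean document; each statement's English description precedes it below -/
import Mathlib

section
/- Performance bound for lasso in the prediction norm (Theorem 3.1, first part): Let c > 1 and c̄ = (c+1)/(c−1). Suppose κ(c̄) > 0, λ > 0, and λ ≥ c·n·‖S‖_∞. Then any lasso estimator β̂ satisfies ‖β̂ − β0‖_{2,n} ≤ (1 + 1/c)·λ√s/(n·κ(c̄)) + 2·c_s. -/
/-!
Write `δ = β̂ - β0`. Comparing the lasso objective at `β̂` and at `β0` and expanding the squares
gives `‖δ‖²_{2,n} ≤ S'δ + 2 c_s ‖δ‖_{2,n} + (λ/n)(‖δ_T‖₁ - ‖δ_{Tᶜ}‖₁)`, the approximation error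
entering through Cauchy–Schwarz. Since `S'δ ≤ ‖S‖_∞ ‖δ‖₁ ≤ λ‖δ‖₁/(cn)`, the last two terms are at
most `(λ/n)((1 + 1/c)‖δ_T‖₁ - (1 - 1/c)‖δ_{Tᶜ}‖₁)`. If this is negative, `‖δ‖_{2,n} ≤ 2 c_s`.
Otherwise `δ` lies in the cone `‖δ_{Tᶜ}‖₁ ≤ c̄ ‖δ_T‖₁`, where the restricted eigenvalue gives
`‖δ_T‖₁ ≤ √s ‖δ‖_{2,n} / κ(c̄)`, and the resulting quadratic inequality in `‖δ‖_{2,n}` is solved.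
-/

open Finset MeasureTheory ProbabilityTheory

noncomputable section

/-- Prediction norm `‖δ‖_{2,n} = ((1/n) ∑_i (x_i'δ)²)^{1/2}`. -/
def predNorm (n p : ℕ) (x : Fin n → Fin p → ℝ) (δ : Fin p → ℝ) : ℝ :=
  Real.sqrt ((n : ℝ)⁻¹ * ∑ i, (∑ j, x i j * δ j) ^ 2)

/-- Least-squares criterion `Q̂(β) = (1/n) ∑_i (y_i - x_i'β)²`. -/
def Qls (n p : ℕ) (x : Fin n → Fin p → ℝ) (y : Fin n → ℝ) (β : Fin p → ℝ) : ℝ :=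
  (n : ℝ)⁻¹ * ∑ i, (y i - ∑ j, x i j * β j) ^ 2

/-- ℓ1-norm on `ℝ^p`. -/
def l1 {p : ℕ} (v : Fin p → ℝ) : ℝ := ∑ j, |v j|

/-- sup-norm (max-absolute-coordinate norm) on `ℝ^p`. -/
def supNorm {p : ℕ} (v : Fin p → ℝ) : ℝ := ⨆ j, |v j|

/-- `restr A δ` is `δ` with coordinates outside `A` set to `0`. -/
def restr {p : ℕ} (A : Finset (Fin p)) (δ : Fin p → ℝ) : Fin p → ℝ :=
  fun j => if j ∈ A then δ j else 0

/-- Support of a vector, as a finset. -/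
def suppF {p : ℕ} (v : Fin p → ℝ) : Finset (Fin p) :=
  Finset.univ.filter (fun j => v j ≠ 0)

/-- Restricted eigenvalue `κ(c̄)`. -/
def kappaRE (n p : ℕ) (x : Fin n → Fin p → ℝ) (T : Finset (Fin p)) (cbar : ℝ) : ℝ :=
  sInf {r : ℝ | ∃ δ : Fin p → ℝ, δ ≠ 0 ∧ l1 (restr Tᶜ δ) ≤ cbar * l1 (restr T δ) ∧
    r = Real.sqrt T.card * predNorm n p x δ / l1 (restr T δ)}

/-- Restricted sparse maximal eigenvalue `φ(m)`. -/
def phiRSE (n p : ℕ) (x : Fin n → Fin p → ℝ) (T : Finset (Fin p)) (m : ℕ) : ℝ :=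
  sSup {r : ℝ | ∃ δ : Fin p → ℝ, δ ≠ 0 ∧ (suppF (restr Tᶜ δ)).card ≤ m ∧
    r = (predNorm n p x δ) ^ 2 / ∑ j, δ j ^ 2}

/-- Restricted sparse minimal eigenvalue `κ̃(m)²`. -/
def kappaTildeSq (n p : ℕ) (x : Fin n → Fin p → ℝ) (T : Finset (Fin p)) (m : ℕ) : ℝ :=
  sInf {r : ℝ | ∃ δ : Fin p → ℝ, δ ≠ 0 ∧ (suppF (restr Tᶜ δ)).card ≤ m ∧
    r = (predNorm n p x δ) ^ 2 / ∑ j, δ j ^ 2}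

/-- The condition number `μ(m) = √φ(m)/κ̃(m)`. -/
def muCond (n p : ℕ) (x : Fin n → Fin p → ℝ) (T : Finset (Fin p)) (m : ℕ) : ℝ :=
  Real.sqrt (phiRSE n p x T m) / Real.sqrt (kappaTildeSq n p x T m)

open Matrix

section L1

variable {p : ℕ}

theorem l1_restr (A : Finset (Fin p)) (v : Fin p → ℝ) : l1 (restr A v) = ∑ j ∈ A, |v j| := by
  simp [l1, restr, apply_ite abs, sum_ite_mem]

theorem l1_restr_nonneg (A : Finset (Fin p)) (v : Fin p → ℝ) : 0 ≤ l1 (restr A v) := by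
  rw [l1_restr]
  positivity

theorem l1_eq_l1_restr_add_l1_restr_compl (A : Finset (Fin p)) (v : Fin p → ℝ) :
    l1 v = l1 (restr A v) + l1 (restr Aᶜ v) := by
  rw [l1_restr, l1_restr, l1, sum_add_sum_compl]

theorem l1_sub_l1_le {T : Finset (Fin p)} {β0 : Fin p → ℝ} (hβ0 : ∀ j ∉ T, β0 j = 0)
    (β : Fin p → ℝ) :
    l1 β0 - l1 β ≤ l1 (restr T (β - β0)) - l1 (restr Tᶜ (β - β0)) := by
  rw [l1_eq_l1_restr_add_l1_restr_compl T β0, l1_eq_l1_restr_add_l1_restr_compl T β]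
  simp only [l1_restr]
  have hon : ∑ j ∈ T, |β0 j| - ∑ j ∈ T, |β j| ≤ ∑ j ∈ T, |(β - β0) j| := by
    rw [← sum_sub_distrib]
    gcongr with j
    rw [Pi.sub_apply, abs_sub_comm]
    exact abs_sub_abs_le_abs_sub _ _
  have hoff₀ : ∑ j ∈ Tᶜ, |β0 j| = 0 :=
    sum_eq_zero fun j hj => by simp [hβ0 j (mem_compl.1 hj)]
  have hoff : ∑ j ∈ Tᶜ, |(β - β0) j| = ∑ j ∈ Tᶜ, |β j| :=
    sum_congr rfl fun j hj => by simp [hβ0 j (mem_compl.1 hj)]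
  linarith

theorem abs_le_supNorm (v : Fin p → ℝ) (j : Fin p) : |v j| ≤ supNorm v :=
  le_ciSup (f := fun j => |v j|) (Set.finite_range _).bddAbove j

theorem sum_mul_le_supNorm_mul_l1 (v w : Fin p → ℝ) : ∑ j, v j * w j ≤ supNorm v * l1 w := by
  rw [l1, mul_sum]
  refine sum_le_sum fun j _ => ?_
  calc v j * w j ≤ |v j| * |w j| := abs_mul (v j) (w j) ▸ le_abs_self _
    _ ≤ supNorm v * |w j| := by gcongr; exact abs_le_supNorm v j

end L1

theorem mul_sum_mul_le_sqrt_mul_sqrt {ι : Type*} (s : Finset ι) {w : ℝ} (hw : 0 ≤ w)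
    (a b : ι → ℝ) :
    w * ∑ i ∈ s, a i * b i ≤ √(w * ∑ i ∈ s, a i ^ 2) * √(w * ∑ i ∈ s, b i ^ 2) := by
  rw [Real.sqrt_mul hw, Real.sqrt_mul hw, mul_mul_mul_comm, Real.mul_self_sqrt hw]
  exact mul_le_mul_of_nonneg_left (Real.sum_mul_le_sqrt_mul_sqrt _ _ _) hw

theorem le_of_sq_le_mul {a K : ℝ} (hK : 0 ≤ K) (h : a ^ 2 ≤ K * a) : a ≤ K := by
  nlinarith

theorem le_cbar_mul_iff {c t u : ℝ} (hc : 1 < c) :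
    u ≤ (c + 1) / (c - 1) * t ↔ (1 - 1 / c) * u ≤ (1 + 1 / c) * t := by
  have hc₀ : 0 < c := by linarith
  rw [div_mul_eq_mul_div, le_div_iff₀ (by linarith),
    show (1 - 1 / c) * u = u * (c - 1) / c by field_simp,
    show (1 + 1 / c) * t = (c + 1) * t / c by field_simp, div_le_div_iff_of_pos_right hc₀]

def score (n p : ℕ) (x : Fin n → Fin p → ℝ) (y f : Fin n → ℝ) : Fin p → ℝ :=
  fun j => (2 / n : ℝ) * ∑ i, (y i - f i) * x i j

section Prediction

variable {n p : ℕ} (x : Fin n → Fin p → ℝ)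

theorem predNorm_sq (δ : Fin p → ℝ) : predNorm n p x δ ^ 2 = (n : ℝ)⁻¹ * ∑ i, (x *ᵥ δ) i ^ 2 :=
  Real.sq_sqrt (by positivity)

theorem sum_score_mul (y f : Fin n → ℝ) (δ : Fin p → ℝ) :
    ∑ j, score n p x y f j * δ j = 2 / n * ∑ i, (y i - f i) * (x *ᵥ δ) i := by
  simp only [score, mulVec, dotProduct, mul_sum, sum_mul]
  rw [sum_comm]
  exact sum_congr rfl fun i _ => sum_congr rfl fun j _ => by ring

theorem Qls_sub_Qls (y f : Fin n → ℝ) (β β0 : Fin p → ℝ) :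
    Qls n p x y β - Qls n p x y β0 = predNorm n p x (β - β0) ^ 2
      - ∑ j, score n p x y f j * (β - β0) j
      - 2 * ((n : ℝ)⁻¹ * ∑ i, (f i - (x *ᵥ β0) i) * (x *ᵥ (β - β0)) i) := by
  have hβ : x *ᵥ β = x *ᵥ β0 + x *ᵥ (β - β0) := by
    funext i
    simp only [mulVec, dotProduct, Pi.add_apply, Pi.sub_apply, mul_sub, sum_sub_distrib]
    ring
  change (n : ℝ)⁻¹ * ∑ i, (y i - (x *ᵥ β) i) ^ 2 - (n : ℝ)⁻¹ * ∑ i, (y i - (x *ᵥ β0) i) ^ 2 = _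
  rw [predNorm_sq, sum_score_mul, hβ]
  simp only [Pi.add_apply, div_eq_mul_inv, mul_sum, ← sum_sub_distrib]
  exact sum_congr rfl fun i _ => by ring

theorem lasso_basic_inequality {y f : Fin n → ℝ} {T : Finset (Fin p)} {β0 βhat : Fin p → ℝ}
    {lam : ℝ} (hlam : 0 ≤ lam) (hβ0 : ∀ j ∉ T, β0 j = 0)
    (hβhat : ∀ β : Fin p → ℝ,
      Qls n p x y βhat + lam / n * l1 βhat ≤ Qls n p x y β + lam / n * l1 β) :
    predNorm n p x (βhat - β0) ^ 2 ≤ ∑ j, score n p x y f j * (βhat - β0) j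
      + 2 * √((n : ℝ)⁻¹ * ∑ i, (f i - (x *ᵥ β0) i) ^ 2) * predNorm n p x (βhat - β0)
      + lam / n * (l1 (restr T (βhat - β0)) - l1 (restr Tᶜ (βhat - β0))) := by
  have hopt := hβhat β0
  have hexp := Qls_sub_Qls x y f βhat β0
  have happrox : (n : ℝ)⁻¹ * ∑ i, (f i - (x *ᵥ β0) i) * (x *ᵥ (βhat - β0)) i
      ≤ √((n : ℝ)⁻¹ * ∑ i, (f i - (x *ᵥ β0) i) ^ 2) * predNorm n p x (βhat - β0) :=
    mul_sum_mul_le_sqrt_mul_sqrt _ (by positivity) _ _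
  have hpen := mul_le_mul_of_nonneg_left (l1_sub_l1_le hβ0 βhat) (by positivity : 0 ≤ lam / n)
  rw [mul_sub] at hpen
  linarith

theorem lasso_basic_inequality_of_supNorm_score_le {y f : Fin n → ℝ} {T : Finset (Fin p)}
    {β0 βhat : Fin p → ℝ} {c lam : ℝ} (hn : 0 < n) (hc : 0 < c) (hlam : 0 ≤ lam)
    (hβ0 : ∀ j ∉ T, β0 j = 0)
    (hβhat : ∀ β : Fin p → ℝ,
      Qls n p x y βhat + lam / n * l1 βhat ≤ Qls n p x y β + lam / n * l1 β)
    (hscore : c * n * supNorm (score n p x y f) ≤ lam) :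
    predNorm n p x (βhat - β0) ^ 2
      ≤ 2 * √((n : ℝ)⁻¹ * ∑ i, (f i - (x *ᵥ β0) i) ^ 2) * predNorm n p x (βhat - β0)
        + lam / n * ((1 + 1 / c) * l1 (restr T (βhat - β0))
          - (1 - 1 / c) * l1 (restr Tᶜ (βhat - β0))) := by
  have hn₀ : (0 : ℝ) < n := by exact_mod_cast hn
  have hsum : ∑ j, score n p x y f j * (βhat - β0) j
      ≤ lam / (c * n) * (l1 (restr T (βhat - β0)) + l1 (restr Tᶜ (βhat - β0))) := by
    rw [← l1_eq_l1_restr_add_l1_restr_compl]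
    refine (sum_mul_le_supNorm_mul_l1 _ _).trans (mul_le_mul_of_nonneg_right ?_ ?_)
    · rw [le_div_iff₀ (by positivity)]
      linarith
    · exact sum_nonneg fun j _ => abs_nonneg _
  have hpen : ∀ t u : ℝ, lam / (c * n) * (t + u) + lam / n * (t - u)
      = lam / n * ((1 + 1 / c) * t - (1 - 1 / c) * u) := fun t u => by
    field_simp
    ring
  linarith [lasso_basic_inequality x (f := f) hlam hβ0 hβhat, hpen (l1 (restr T (βhat - β0)))
    (l1 (restr Tᶜ (βhat - β0)))]

end Prediction

theorem kappaRE_le_of_mem_cone {n p : ℕ} {x : Fin n → Fin p → ℝ} {T : Finset (Fin p)} {cbar : ℝ}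
    {δ : Fin p → ℝ} (hδ : δ ≠ 0) (hcone : l1 (restr Tᶜ δ) ≤ cbar * l1 (restr T δ)) :
    kappaRE n p x T cbar ≤ √T.card * predNorm n p x δ / l1 (restr T δ) := by
  refine csInf_le ⟨0, ?_⟩ ⟨δ, hδ, hcone, rfl⟩
  rintro r ⟨δ', -, -, rfl⟩
  exact div_nonneg (mul_nonneg (Real.sqrt_nonneg _) (Real.sqrt_nonneg _)) (l1_restr_nonneg _ _)

theorem l1_restr_le_of_kappaRE_pos {n p : ℕ} {x : Fin n → Fin p → ℝ} {T : Finset (Fin p)}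
    {cbar : ℝ} {δ : Fin p → ℝ} (hκ : 0 < kappaRE n p x T cbar)
    (hcone : l1 (restr Tᶜ δ) ≤ cbar * l1 (restr T δ)) :
    l1 (restr T δ) ≤ √T.card * predNorm n p x δ / kappaRE n p x T cbar := by
  rcases (l1_restr_nonneg T δ).eq_or_lt with ht | ht
  · rw [← ht]
    exact div_nonneg (mul_nonneg (Real.sqrt_nonneg _) (Real.sqrt_nonneg _)) hκ.le
  · have hδ : δ ≠ 0 := by
      rintro rfl
      simp [l1, restr] at ht
    rw [le_div_iff₀ hκ, mul_comm]
    exact (le_div_iff₀ ht).1 (kappaRE_le_of_mem_cone hδ hcone)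

theorem predNorm_le_of_basic_inequality {n p : ℕ} {x : Fin n → Fin p → ℝ} {T : Finset (Fin p)}
    {δ : Fin p → ℝ} {c lam cs : ℝ} (hc : 1 < c) (hκ : 0 < kappaRE n p x T ((c + 1) / (c - 1)))
    (hlam : 0 ≤ lam) (hcs : 0 ≤ cs)
    (h : predNorm n p x δ ^ 2 ≤ 2 * cs * predNorm n p x δ
      + lam / n * ((1 + 1 / c) * l1 (restr T δ) - (1 - 1 / c) * l1 (restr Tᶜ δ))) :
    predNorm n p x δ ≤
      (1 + 1 / c) * (lam * √T.card) / (n * kappaRE n p x T ((c + 1) / (c - 1))) + 2 * cs := by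
  set a := predNorm n p x δ
  set t := l1 (restr T δ)
  set u := l1 (restr Tᶜ δ)
  set κ := kappaRE n p x T ((c + 1) / (c - 1))
  have hc₀ : 0 < c := by linarith
  by_cases hcone : (1 - 1 / c) * u ≤ (1 + 1 / c) * t
  · have ht := l1_restr_le_of_kappaRE_pos hκ ((le_cbar_mul_iff hc).2 hcone)
    have hpen : lam / n * ((1 + 1 / c) * t - (1 - 1 / c) * u)
        ≤ (1 + 1 / c) * (lam * √T.card) / (n * κ) * a :=
      calc lam / n * ((1 + 1 / c) * t - (1 - 1 / c) * u)
          ≤ lam / n * ((1 + 1 / c) * t) := by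
            have : 0 ≤ 1 - 1 / c := by rw [sub_nonneg, div_le_one hc₀]; exact hc.le
            gcongr
            exact sub_le_self _ (mul_nonneg this (l1_restr_nonneg _ _))
        _ ≤ lam / n * ((1 + 1 / c) * (√T.card * a / κ)) := by gcongr
        _ = (1 + 1 / c) * (lam * √T.card) / (n * κ) * a := by ring
    exact le_of_sq_le_mul (by positivity) (by linarith)
  · have hpen : lam / n * ((1 + 1 / c) * t - (1 - 1 / c) * u) ≤ 0 :=
      mul_nonpos_of_nonneg_of_nonpos (by positivity) (by linarith)
    have hK : 0 ≤ (1 + 1 / c) * (lam * √T.card) / (n * κ) := by positivity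
    linarith [le_of_sq_le_mul (by positivity) (show a ^ 2 ≤ 2 * cs * a by linarith)]

theorem lasso_prediction_norm_bound_general
    (n p : ℕ) (hn : 0 < n)
    (x : Fin n → Fin p → ℝ) (y f : Fin n → ℝ)
    (β0 : Fin p → ℝ) (T : Finset (Fin p)) (hT : T = suppF β0)
    (s : ℕ) (hs : s = T.card)
    (cs : ℝ) (hcs : cs = Real.sqrt ((n : ℝ)⁻¹ * ∑ i, (f i - ∑ j, x i j * β0 j) ^ 2))
    (c : ℝ) (hc : 1 < c) (cbar : ℝ) (hcbar : cbar = (c + 1) / (c - 1))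
    (hκ : 0 < kappaRE n p x T cbar)
    (S : Fin p → ℝ) (hS : S = fun j => (2 / n : ℝ) * ∑ i, (y i - f i) * x i j)
    (lam : ℝ) (hlam : 0 < lam) (hlamS : c * n * supNorm S ≤ lam)
    (βhat : Fin p → ℝ)
    (hβhat : ∀ β : Fin p → ℝ,
      Qls n p x y βhat + lam / n * l1 βhat ≤ Qls n p x y β + lam / n * l1 β) :
    predNorm n p x (βhat - β0) ≤
      (1 + 1 / c) * (lam * Real.sqrt s) / (n * kappaRE n p x T cbar) + 2 * cs := by
  subst hs hcbar
  have hβ0 : ∀ j ∉ T, β0 j = 0 := fun j hj => by simpa [hT, suppF] using hj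
  have hbasic := lasso_basic_inequality_of_supNorm_score_le x (f := f) hn (by linarith) hlam.le
    hβ0 hβhat (hS ▸ hlamS)
  refine predNorm_le_of_basic_inequality hc hκ hlam.le (hcs ▸ Real.sqrt_nonneg _) ?_
  rw [hcs]
  exact hbasic

/-- Theorem 3.1, first part: performance bound for lasso in the
prediction norm. -/
theorem lasso_prediction_norm_bound
    (n p : ℕ) (hn : 0 < n) (hp : 0 < p)
    (x : Fin n → Fin p → ℝ) (y f : Fin n → ℝ)
    (hx : ∀ j, (n : ℝ)⁻¹ * ∑ i, x i j ^ 2 = 1)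
    (β0 : Fin p → ℝ) (T : Finset (Fin p)) (hT : T = suppF β0)
    (s : ℕ) (hs : s = T.card) (hs1 : 1 ≤ s)
    (cs : ℝ) (hcs : cs = Real.sqrt ((n : ℝ)⁻¹ * ∑ i, (f i - ∑ j, x i j * β0 j) ^ 2))
    (c : ℝ) (hc : 1 < c) (cbar : ℝ) (hcbar : cbar = (c + 1) / (c - 1))
    (hκ : 0 < kappaRE n p x T cbar)
    (S : Fin p → ℝ) (hS : S = fun j => (2 / n : ℝ) * ∑ i, (y i - f i) * x i j)
    (lam : ℝ) (hlam : 0 < lam) (hlamS : c * n * supNorm S ≤ lam)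
    (βhat : Fin p → ℝ)
    (hβhat : ∀ β : Fin p → ℝ,
      Qls n p x y βhat + lam / n * l1 βhat ≤ Qls n p x y β + lam / n * l1 β) :
    predNorm n p x (βhat - β0) ≤
      (1 + 1 / c) * (lam * Real.sqrt s) / (n * kappaRE n p x T cbar) + 2 * cs :=
  lasso_prediction_norm_bound_general n p hn x y f β0 T hT s hs cs hcs c hc cbar hcbar hκ S hS lam
    hlam hlamS βhat hβhat
end
end

section
/- Bound on the correlation between regressors and the oracle approximation error (Step 2 in the proof of Theorem 3.2): Assume β0 and s are defined by the oracle program with s < min(p,n). Then max_{1≤j≤p} |(1/n)∑_{i=1}^n x_{ij}·r_i| ≤ min{σ/√n, c_s}; in fact (1/n)∑_i x_{ij}·r_i = 0 for every j ∈ T. -/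
open Finset MeasureTheory ProbabilityTheory

noncomputable section

/-- Step 2 in the proof of Theorem 3.2: bound on the correlation between
regressors and the oracle approximation error. -/
theorem oracle_approximation_error_orthogonality
    (n p : ℕ) (hn : 0 < n) (hp : 0 < p)
    (x : Fin n → Fin p → ℝ) (f : Fin n → ℝ)
    (hx : ∀ j, (n : ℝ)⁻¹ * ∑ i, x i j ^ 2 = 1)
    (σ : ℝ) (hσ : 0 < σ)
    -- the oracle program
    (ck2 : ℕ → ℝ)
    (hck2 : ∀ k, ck2 k = sInf {r : ℝ | ∃ β : Fin p → ℝ, (suppF β).card ≤ k ∧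
      r = (n : ℝ)⁻¹ * ∑ i, (f i - ∑ j, x i j * β j) ^ 2})
    (s : ℕ) (hsn : s < min p n)
    (hsopt : ∀ k ≤ min p n, ck2 s + σ ^ 2 * s / n ≤ ck2 k + σ ^ 2 * k / n)
    (hsmin : ∀ k < s, ck2 s + σ ^ 2 * s / n < ck2 k + σ ^ 2 * k / n)
    (β0 : Fin p → ℝ) (hβ0s : (suppF β0).card ≤ s)
    (hβ0 : ∀ β : Fin p → ℝ, (suppF β).card ≤ s →
      (n : ℝ)⁻¹ * ∑ i, (f i - ∑ j, x i j * β0 j) ^ 2 ≤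
        (n : ℝ)⁻¹ * ∑ i, (f i - ∑ j, x i j * β j) ^ 2)
    (T : Finset (Fin p)) (hT : T = suppF β0)
    (r : Fin n → ℝ) (hr : r = fun i => f i - ∑ j, x i j * β0 j)
    (cs : ℝ) (hcs : cs = Real.sqrt ((n : ℝ)⁻¹ * ∑ i, r i ^ 2)) :
    (∀ j : Fin p, |(n : ℝ)⁻¹ * ∑ i, x i j * r i| ≤ min (σ / Real.sqrt n) cs) ∧
      (∀ j ∈ T, (n : ℝ)⁻¹ * ∑ i, x i j * r i = 0) := by
  have hn' : (0:ℝ) < (n:ℝ) := by exact_mod_cast hn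
  have hninv : (0:ℝ) < (n:ℝ)⁻¹ := inv_pos.2 hn'
  set A : Fin p → ℝ := fun j => (n : ℝ)⁻¹ * ∑ i, x i j * r i with hA
  -- quadratic expansion of the criterion along a coordinate perturbation
  have key : ∀ (j : Fin p) (t : ℝ),
      (n : ℝ)⁻¹ * ∑ i, (f i - ∑ j', x i j' * (β0 j' + if j' = j then t else 0)) ^ 2
      = (n : ℝ)⁻¹ * ∑ i, (f i - ∑ j', x i j' * β0 j') ^ 2 - 2 * t * A j + t ^ 2 := by
    intro j t
    have hterm : ∀ i, (f i - ∑ j', x i j' * (β0 j' + if j' = j then t else 0))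
        = r i - t * x i j := by
      intro i
      have : (∑ j', x i j' * (β0 j' + if j' = j then t else 0))
          = (∑ j', x i j' * β0 j') + t * x i j := by
        simp only [mul_add, mul_ite, mul_zero]
        rw [Finset.sum_add_distrib,
          Finset.sum_ite_eq' Finset.univ j (fun j' => x i j' * t)]
        simp [mul_comm]
      rw [hr]; simp only [this]; ring
    calc (n : ℝ)⁻¹ * ∑ i, (f i - ∑ j', x i j' * (β0 j' + if j' = j then t else 0)) ^ 2
        = (n : ℝ)⁻¹ * ∑ i, (r i ^ 2 - 2 * t * (x i j * r i) + t ^ 2 * x i j ^ 2) := by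
          congr 1; refine Finset.sum_congr rfl fun i _ => ?_; rw [hterm i]; ring
      _ = (n : ℝ)⁻¹ * ∑ i, r i ^ 2 - 2 * t * ((n : ℝ)⁻¹ * ∑ i, x i j * r i)
            + t ^ 2 * ((n : ℝ)⁻¹ * ∑ i, x i j ^ 2) := by
          rw [Finset.sum_add_distrib, Finset.sum_sub_distrib, ← Finset.mul_sum, ← Finset.mul_sum]
          ring
      _ = (n : ℝ)⁻¹ * ∑ i, (f i - ∑ j', x i j' * β0 j') ^ 2 - 2 * t * A j + t ^ 2 := by
          rw [hx j, hA, hr]; ring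
  have hsupp : ∀ (j : Fin p) (t : ℝ),
      suppF (fun j' => β0 j' + if j' = j then t else 0) ⊆ insert j (suppF β0) := by
    intro j t j' hj'
    simp only [suppF, Finset.mem_filter, Finset.mem_univ, true_and] at hj'
    by_cases h : j' = j
    · exact Finset.mem_insert.2 (Or.inl h)
    · refine Finset.mem_insert.2 (Or.inr ?_)
      simp only [suppF, Finset.mem_filter, Finset.mem_univ, true_and]
      intro h0; apply hj'; simp [h, h0]
  -- orthogonality on the support
  have part2 : ∀ j ∈ T, A j = 0 := by
    intro j hj
    have hmem : j ∈ suppF β0 := by rwa [hT] at hj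
    have hcard : (suppF (fun j' => β0 j' + if j' = j then A j else 0)).card ≤ s := by
      refine le_trans (Finset.card_le_card ?_) hβ0s
      refine (hsupp j (A j)).trans ?_
      rw [Finset.insert_eq_self.2 hmem]
    have := hβ0 _ hcard
    rw [key j (A j)] at this
    nlinarith [sq_nonneg (A j)]
  refine ⟨?_, part2⟩
  intro j
  -- Cauchy-Schwarz bound
  have hcs0 : 0 ≤ cs := by rw [hcs]; exact Real.sqrt_nonneg _
  have hcssq : cs ^ 2 = (n : ℝ)⁻¹ * ∑ i, r i ^ 2 := by
    rw [hcs, Real.sq_sqrt]; positivity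
  have hCS : |A j| ≤ cs := by
    have h1 : (∑ i, x i j * r i) ^ 2 ≤ (∑ i, x i j ^ 2) * ∑ i, r i ^ 2 :=
      Finset.sum_mul_sq_le_sq_mul_sq Finset.univ _ _
    have h2 : (A j) ^ 2 ≤ cs ^ 2 := by
      have hx1 : (n : ℝ)⁻¹ * ∑ i, x i j ^ 2 = 1 := hx j
      have : (A j) ^ 2 = ((n : ℝ)⁻¹ * ∑ i, x i j ^ 2) * ((n : ℝ)⁻¹ * ∑ i, r i ^ 2)
          - (n : ℝ)⁻¹ ^ 2 * ((∑ i, x i j ^ 2) * ∑ i, r i ^ 2 - (∑ i, x i j * r i) ^ 2) := by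
        rw [hA]; ring
      rw [hcssq, this, hx1, one_mul]
      nlinarith [sq_nonneg ((n:ℝ)⁻¹)]
    calc |A j| = Real.sqrt ((A j) ^ 2) := (Real.sqrt_sq_eq_abs _).symm
      _ ≤ Real.sqrt (cs ^ 2) := Real.sqrt_le_sqrt h2
      _ = cs := Real.sqrt_sq hcs0
  -- σ/√n bound via the oracle program
  have hbdd : ∀ k : ℕ, BddBelow {rr : ℝ | ∃ β : Fin p → ℝ, (suppF β).card ≤ k ∧
      rr = (n : ℝ)⁻¹ * ∑ i, (f i - ∑ j', x i j' * β j') ^ 2} := by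
    intro k
    refine ⟨0, fun rr hrr => ?_⟩
    obtain ⟨β, _, rfl⟩ := hrr
    positivity
  have hQle : (n : ℝ)⁻¹ * ∑ i, (f i - ∑ j', x i j' * β0 j') ^ 2 ≤ ck2 s := by
    rw [hck2 s]
    refine le_csInf ⟨_, β0, hβ0s, rfl⟩ fun rr hrr => ?_
    obtain ⟨β, hβ, rfl⟩ := hrr
    exact hβ0 β hβ
  have hck2s1 : ck2 (s + 1) ≤
      (n : ℝ)⁻¹ * ∑ i, (f i - ∑ j', x i j' * β0 j') ^ 2 - (A j) ^ 2 := by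
    rw [hck2 (s + 1)]
    refine csInf_le (hbdd _) ?_
    refine ⟨fun j' => β0 j' + if j' = j then A j else 0, ?_, ?_⟩
    · refine le_trans (Finset.card_le_card (hsupp j (A j))) ?_
      exact le_trans (Finset.card_insert_le _ _) (by omega)
    · rw [key j (A j)]; ring
  have hstep : ck2 s ≤ ck2 (s + 1) + σ ^ 2 / n := by
    have h := hsopt (s + 1) (by omega)
    have : σ ^ 2 * ((s : ℝ) + 1) / n = σ ^ 2 * s / n + σ ^ 2 / n := by ring
    push_cast at h
    linarith
  have hAsq : (A j) ^ 2 ≤ σ ^ 2 / n := by linarith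
  have hsn0 : (0:ℝ) < Real.sqrt n := Real.sqrt_pos.2 hn'
  have hσn : (σ / Real.sqrt n) ^ 2 = σ ^ 2 / n := by
    rw [div_pow, Real.sq_sqrt hn'.le]
  have hσb : |A j| ≤ σ / Real.sqrt n := by
    have h2 : (A j) ^ 2 ≤ (σ / Real.sqrt n) ^ 2 := by rw [hσn]; exact hAsq
    calc |A j| = Real.sqrt ((A j) ^ 2) := (Real.sqrt_sq_eq_abs _).symm
      _ ≤ Real.sqrt ((σ / Real.sqrt n) ^ 2) := Real.sqrt_le_sqrt h2
      _ = σ / Real.sqrt n := Real.sqrt_sq (by positivity)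
  exact le_min hσb hCS
end
end

section
/- Sub-linearity of restricted sparse eigenvalues (Lemma 3.2): Let W be a positive semidefinite p×p real matrix, T ⊆ {1,…,p}, and for an integer m ≥ 0 define φ(m) := sup{δ'Wδ/‖δ‖₂² : δ ∈ ℝ^p, δ ≠ 0, ‖δ_{T^c}‖₀ ≤ m}. Then for any integer k ≥ 0 and any real ℓ ≥ 1, φ(⌈ℓk⌉) ≤ ⌈ℓ⌉·φ(k). -/
open Finset MeasureTheory ProbabilityTheory

noncomputable section

/-!
Split the support of `δ` outside `T` into `M = ⌈ℓ⌉` blocks of at most `k` coordinates and write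
`δ = ∑ᵢ vᵢ` with `vᵢ = δ_T / M + (block i of δ_{Tᶜ})`. Each `vᵢ` is `k`-sparse outside `T`, so
`vᵢ'W vᵢ ≤ φ(k) ‖vᵢ‖²`. Positive semidefiniteness gives `(∑ vᵢ)'W (∑ vᵢ) ≤ M ∑ vᵢ'W vᵢ`, and
`∑ ‖vᵢ‖² = ‖δ_T‖² / M + ‖δ_{Tᶜ}‖² ≤ ‖δ‖²`; together `δ'W δ ≤ M φ(k) ‖δ‖²`, and `⌈ℓ k⌉ ≤ M k`.
-/

namespace Matrix

variable {n : Type*} [Fintype n] {W : Matrix n n ℝ}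

lemma IsHermitian.dotProduct_mulVec_comm (hW : W.IsHermitian) (x y : n → ℝ) :
    x ⬝ᵥ W *ᵥ y = y ⬝ᵥ W *ᵥ x := by
  rw [← dotProduct_transpose_mulVec, ← conjTranspose_eq_transpose_of_trivial, hW.eq]

namespace PosSemidef

lemma dotProduct_mulVec_self_nonneg (hW : W.PosSemidef) (x : n → ℝ) : 0 ≤ x ⬝ᵥ W *ᵥ x := by
  simpa using hW.dotProduct_mulVec_nonneg x

lemma two_mul_dotProduct_mulVec_le (hW : W.PosSemidef) (x y : n → ℝ) :
    2 * (x ⬝ᵥ W *ᵥ y) ≤ x ⬝ᵥ W *ᵥ x + y ⬝ᵥ W *ᵥ y := by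
  have h := hW.dotProduct_mulVec_self_nonneg (x - y)
  rw [mulVec_sub, dotProduct_sub, sub_dotProduct, sub_dotProduct,
    hW.isHermitian.dotProduct_mulVec_comm y x] at h
  linarith

lemma sum_dotProduct_mulVec_sum_le {ι : Type*} (hW : W.PosSemidef) (s : Finset ι)
    (v : ι → n → ℝ) :
    (∑ i ∈ s, v i) ⬝ᵥ W *ᵥ (∑ i ∈ s, v i) ≤ #s * ∑ i ∈ s, v i ⬝ᵥ W *ᵥ v i := by
  set q : ι → ℝ := fun i => v i ⬝ᵥ W *ᵥ v i
  calc (∑ i ∈ s, v i) ⬝ᵥ W *ᵥ (∑ i ∈ s, v i)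
      = ∑ i ∈ s, ∑ j ∈ s, v i ⬝ᵥ W *ᵥ v j := by
        simp only [mulVec_sum, sum_dotProduct, dotProduct_sum]
        exact sum_comm
    _ ≤ ∑ i ∈ s, ∑ j ∈ s, (q i + q j) / 2 := by
        gcongr with i _ j _
        linarith [hW.two_mul_dotProduct_mulVec_le (v i) (v j)]
    _ = #s * ∑ i ∈ s, q i := by
        simp only [← sum_div, sum_add_distrib, sum_const, nsmul_eq_mul, ← mul_sum]
        ring

end PosSemidef

lemma dotProduct_mulVec_self_le_sum_abs_mul (W : Matrix n n ℝ) (x : n → ℝ) :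
    x ⬝ᵥ W *ᵥ x ≤ (∑ i, ∑ j, |W i j|) * ∑ j, x j ^ 2 := by
  have hx : ∀ i, x i ^ 2 ≤ ∑ j, x j ^ 2 := fun i =>
    single_le_sum (f := fun j => x j ^ 2) (fun j _ => sq_nonneg _) (mem_univ i)
  calc x ⬝ᵥ W *ᵥ x = ∑ i, ∑ j, x i * (W i j * x j) := by simp only [dotProduct, mulVec, mul_sum]
    _ ≤ ∑ i, ∑ j, |W i j| * ∑ l, x l ^ 2 := by
      refine sum_le_sum fun i _ => sum_le_sum fun j _ => ?_
      calc x i * (W i j * x j) ≤ |W i j| * (|x i| * |x j|) := by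
            rw [← abs_mul, ← abs_mul]
            exact (le_abs_self _).trans_eq (by ring_nf)
        _ ≤ |W i j| * ∑ l, x l ^ 2 := by
            gcongr
            nlinarith [sq_abs (x i), sq_abs (x j), hx i, hx j, two_mul_le_add_sq |x i| |x j|]
    _ = (∑ i, ∑ j, |W i j|) * ∑ j, x j ^ 2 := by simp only [sum_mul]

end Matrix

lemma sum_sq_pos_of_ne_zero {ι : Type*} [Fintype ι] {δ : ι → ℝ} (hδ : δ ≠ 0) :
    0 < ∑ j, δ j ^ 2 := by
  obtain ⟨j, hj⟩ := Function.ne_iff.mp hδ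
  exact sum_pos' (fun j _ => sq_nonneg (δ j)) ⟨j, mem_univ j, sq_pos_of_ne_zero hj⟩

theorem Finset.exists_fiber_card_le {α : Type*} [DecidableEq α] {M k : ℕ} (hM : 0 < M)
    (s : Finset α) (hs : #s ≤ M * k) : ∃ c : α → Fin M, ∀ i, #{j ∈ s | c j = i} ≤ k := by
  induction s using Finset.induction_on with
  | empty => exact ⟨fun _ => ⟨0, hM⟩, by simp⟩
  | insert a s ha ih =>
    rw [card_insert_of_notMem ha] at hs
    obtain ⟨c, hc⟩ := ih (by omega)
    obtain ⟨i₀, -, hi₀⟩ :=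
      exists_card_fiber_lt_of_card_lt_mul (s := s) (t := univ) (f := c) (n := k)
        (by rw [card_univ, Fintype.card_fin]; omega)
    refine ⟨Function.update c a i₀, fun i => ?_⟩
    have h_fiber : {j ∈ s | Function.update c a i₀ j = i} = {j ∈ s | c j = i} :=
      filter_congr fun j hj => by rw [Function.update_of_ne (ne_of_mem_of_not_mem hj ha)]
    rw [filter_insert, h_fiber, Function.update_self]
    split_ifs with h
    · subst h
      have := card_insert_le a {j ∈ s | c j = i₀}
      omega
    · exact hc i

section SparseEigenvalue

open Matrix

variable {p : ℕ} (W : Matrix (Fin p) (Fin p) ℝ) (T : Finset (Fin p))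

def sparseRayleighQuotients (m : ℕ) : Set ℝ :=
  {r : ℝ | ∃ δ : Fin p → ℝ, δ ≠ 0 ∧ #(suppF (restr Tᶜ δ)) ≤ m ∧ r = δ ⬝ᵥ W *ᵥ δ / ∑ j, δ j ^ 2}

lemma bddAbove_sparseRayleighQuotients (m : ℕ) : BddAbove (sparseRayleighQuotients W T m) := by
  refine ⟨∑ i, ∑ j, |W i j|, ?_⟩
  rintro r ⟨δ, -, -, rfl⟩
  exact div_le_of_le_mul₀ (by positivity) (by positivity)
    (W.dotProduct_mulVec_self_le_sum_abs_mul δ)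

lemma sSup_sparseRayleighQuotients_nonneg (hW : W.PosSemidef) (m : ℕ) :
    0 ≤ sSup (sparseRayleighQuotients W T m) :=
  Real.sSup_nonneg fun _ ⟨δ, _, _, hr⟩ =>
    hr ▸ div_nonneg (hW.dotProduct_mulVec_self_nonneg δ) (by positivity)

lemma dotProduct_mulVec_le_sSup_sparseRayleighQuotients_mul {m : ℕ} {δ : Fin p → ℝ}
    (hδ : #(suppF (restr Tᶜ δ)) ≤ m) :
    δ ⬝ᵥ W *ᵥ δ ≤ sSup (sparseRayleighQuotients W T m) * ∑ j, δ j ^ 2 := by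
  rcases eq_or_ne δ 0 with rfl | hδ0
  · simp
  rw [← div_le_iff₀ (sum_sq_pos_of_ne_zero hδ0)]
  exact le_csSup (bddAbove_sparseRayleighQuotients W T m) ⟨δ, hδ0, hδ, rfl⟩

lemma exists_sparse_decomposition {M k : ℕ} (hM : 0 < M) (δ : Fin p → ℝ)
    (hδ : #(suppF (restr Tᶜ δ)) ≤ M * k) :
    ∃ v : Fin M → Fin p → ℝ, ∑ i, v i = δ ∧ (∀ i, #(suppF (restr Tᶜ (v i))) ≤ k) ∧
      ∑ i, ∑ j, v i j ^ 2 ≤ ∑ j, δ j ^ 2 := by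
  obtain ⟨c, hc⟩ := Finset.exists_fiber_card_le hM _ hδ
  refine ⟨fun i j => if j ∈ T then δ j / M else if c j = i then δ j else 0, ?_, ?_, ?_⟩
  · funext j
    rw [Finset.sum_apply]
    by_cases hj : j ∈ T
    · simp only [hj, ↓reduceIte, sum_const, card_univ, Fintype.card_fin, nsmul_eq_mul]
      field_simp
    · simp only [hj, ↓reduceIte, sum_ite_eq, mem_univ]
  · intro i
    refine (card_le_card fun j hj => ?_).trans (hc i)
    by_cases hj : j ∈ T <;> simp_all [suppF, restr]
  · rw [sum_comm]
    gcongr with j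
    by_cases hj : j ∈ T
    · simp only [hj, ↓reduceIte, sum_const, card_univ, Fintype.card_fin, nsmul_eq_mul]
      have hM1 : (1 : ℝ) ≤ M := by exact_mod_cast hM
      calc (M : ℝ) * (δ j / M) ^ 2 = δ j ^ 2 / M := by field_simp
        _ ≤ δ j ^ 2 := div_le_self (sq_nonneg _) hM1
    · simp [hj, ite_pow]

lemma sSup_sparseRayleighQuotients_le_mul (hW : W.PosSemidef) {M k m : ℕ} (hM : 0 < M)
    (hm : m ≤ M * k) :
    sSup (sparseRayleighQuotients W T m) ≤ M * sSup (sparseRayleighQuotients W T k) := by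
  set φk := sSup (sparseRayleighQuotients W T k)
  have hφk : 0 ≤ (M : ℝ) * φk :=
    mul_nonneg (Nat.cast_nonneg _) (sSup_sparseRayleighQuotients_nonneg W T hW k)
  refine Real.sSup_le ?_ hφk
  rintro r ⟨δ, hδ, hsupp, rfl⟩
  obtain ⟨v, rfl, hv_supp, hv_sq⟩ := exists_sparse_decomposition T hM δ (hsupp.trans hm)
  rw [div_le_iff₀ (sum_sq_pos_of_ne_zero hδ)]
  calc (∑ i, v i) ⬝ᵥ W *ᵥ (∑ i, v i) ≤ M * ∑ i, v i ⬝ᵥ W *ᵥ v i := by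
        simpa using hW.sum_dotProduct_mulVec_sum_le univ v
    _ ≤ M * ∑ i, φk * ∑ j, v i j ^ 2 := by
        gcongr with i
        exact dotProduct_mulVec_le_sSup_sparseRayleighQuotients_mul W T (hv_supp i)
    _ = M * φk * ∑ i, ∑ j, v i j ^ 2 := by rw [← mul_sum, mul_assoc]
    _ ≤ M * φk * ∑ j, (∑ i, v i) j ^ 2 := by gcongr

end SparseEigenvalue

theorem restricted_sparse_eigenvalue_sublinear_general
    (p : ℕ)
    (W : Matrix (Fin p) (Fin p) ℝ) (hW : W.PosSemidef)
    (T : Finset (Fin p))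
    (φ : ℕ → ℝ)
    (hφ : ∀ m : ℕ, φ m = sSup {r : ℝ | ∃ δ : Fin p → ℝ, δ ≠ 0 ∧
      (suppF (restr Tᶜ δ)).card ≤ m ∧ r = dotProduct δ (W.mulVec δ) / ∑ j, δ j ^ 2})
    (k : ℕ) (ℓ : ℝ) (hℓ : 1 ≤ ℓ) :
    φ ⌈ℓ * k⌉₊ ≤ (⌈ℓ⌉₊ : ℝ) * φ k := by
  have hM : 0 < ⌈ℓ⌉₊ := Nat.ceil_pos.mpr (by linarith)
  have hm : ⌈ℓ * k⌉₊ ≤ ⌈ℓ⌉₊ * k := Nat.ceil_le.mpr (by push_cast; gcongr; exact Nat.le_ceil ℓ)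
  rw [hφ, hφ]
  exact sSup_sparseRayleighQuotients_le_mul W T hW hM hm

/-- Lemma 3.2: sub-linearity of restricted sparse eigenvalues of a
positive semidefinite matrix. -/
theorem restricted_sparse_eigenvalue_sublinear
    (p : ℕ) (hp : 0 < p)
    (W : Matrix (Fin p) (Fin p) ℝ) (hW : W.PosSemidef)
    (T : Finset (Fin p))
    (φ : ℕ → ℝ)
    (hφ : ∀ m : ℕ, φ m = sSup {r : ℝ | ∃ δ : Fin p → ℝ, δ ≠ 0 ∧
      (suppF (restr Tᶜ δ)).card ≤ m ∧ r = dotProduct δ (W.mulVec δ) / ∑ j, δ j ^ 2})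
    (k : ℕ) (ℓ : ℝ) (hℓ : 1 ≤ ℓ) :
    φ ⌈ℓ * k⌉₊ ≤ (⌈ℓ⌉₊ : ℝ) * φ k :=
  restricted_sparse_eigenvalue_sublinear_general p W hW T φ hφ k ℓ hℓ
end
end

section
/- Sparsity bound for lasso (Theorem 3.3): Let c > 1, c̄ = (c+1)/(c−1). Suppose κ(c̄) > 0, λ > 0, λ ≥ c·n·‖S‖_∞, and let β̂ be a lasso estimator with m̂ = |supp(β̂) \ T| ≤ n. Set L_n := (2c̄/κ(c̄) + 3(c̄+1)·n·c_s/(λ√s))². Then for every natural number m with m > s·φ(m∧n)·2L_n, one has m̂ ≤ s·φ(m∧n)·L_n; consequently m̂ ≤ s·[min_{m∈M} φ(m∧n)]·L_n where M := {m ∈ ℕ : m > s·φ(m∧n)·2L_n}, whenever M is nonempty. -/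
open Finset MeasureTheory ProbabilityTheory

noncomputable section

/-!
On a coordinate `j` where the lasso estimate `β̂` is nonzero, the first-order condition forces
`2 |(1/n) ∑ᵢ xᵢⱼ (yᵢ - xᵢ'β̂)| = λ/n`. The noise contributes at most `λ/(cn)` to this, so each of
the `m̂` selected coordinates outside `T` has correlation at least `(1 - 1/c) λ/(2n)` with the
approximation residual `f - Xβ̂`. By duality, the squared correlations on any `m̂` coordinates sum
to at most `φ(m̂) ‖f - Xβ̂‖²_{2,n}`, and `‖f - Xβ̂‖_{2,n} ≤ c_s + ‖β̂ - β0‖_{2,n}` is controlled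
by the prediction rate of the lasso; together this gives `m̂ ≤ s φ(m̂) L_n`. Finally `φ` is
subadditive, so `φ(k m) ≤ k φ(m)`, and when `m > 2 s φ(m) L_n` covering `m̂` by at most `2 m̂ / m`
blocks of size `m` turns `φ(m̂)` into `φ(m)`.
-/

namespace Lasso

variable {n p : ℕ}

def empNorm (v : Fin n → ℝ) : ℝ := √((n : ℝ)⁻¹ * ∑ i, v i ^ 2)

def fit (x : Fin n → Fin p → ℝ) (β : Fin p → ℝ) : Fin n → ℝ := fun i => ∑ j, x i j * β j

def corr (x : Fin n → Fin p → ℝ) (w : Fin n → ℝ) : Fin p → ℝ :=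
  fun j => (n : ℝ)⁻¹ * ∑ i, w i * x i j

def IsLassoEstimator (n p : ℕ) (x : Fin n → Fin p → ℝ) (y : Fin n → ℝ) (lam : ℝ)
    (βhat : Fin p → ℝ) : Prop :=
  ∀ β, Qls n p x y βhat + lam / n * l1 βhat ≤ Qls n p x y β + lam / n * l1 β

section EmpiricalNorm

lemma empNorm_nonneg (v : Fin n → ℝ) : 0 ≤ empNorm v := Real.sqrt_nonneg _

lemma empNorm_sq (v : Fin n → ℝ) : empNorm v ^ 2 = (n : ℝ)⁻¹ * ∑ i, v i ^ 2 :=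
  Real.sq_sqrt (by positivity)

lemma inv_mul_sum_mul_le_empNorm_mul (a b : Fin n → ℝ) :
    (n : ℝ)⁻¹ * ∑ i, a i * b i ≤ empNorm a * empNorm b := by
  have hn : 0 ≤ (n : ℝ)⁻¹ := by positivity
  calc (n : ℝ)⁻¹ * ∑ i, a i * b i
      ≤ (√(n : ℝ)⁻¹ * √(n : ℝ)⁻¹) * (√(∑ i, a i ^ 2) * √(∑ i, b i ^ 2)) := by
        rw [Real.mul_self_sqrt hn]
        exact mul_le_mul_of_nonneg_left (Real.sum_mul_le_sqrt_mul_sqrt _ _ _) hn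
    _ = empNorm a * empNorm b := by
        simp only [empNorm, Real.sqrt_mul hn]; ring

lemma empNorm_add_le (a b : Fin n → ℝ) : empNorm (a + b) ≤ empNorm a + empNorm b := by
  refine Real.sqrt_le_iff.mpr ⟨add_nonneg (empNorm_nonneg a) (empNorm_nonneg b), ?_⟩
  have hab := inv_mul_sum_mul_le_empNorm_mul a b
  have hexp : (n : ℝ)⁻¹ * ∑ i, (a + b) i ^ 2 =
      (n : ℝ)⁻¹ * ∑ i, a i ^ 2 + 2 * ((n : ℝ)⁻¹ * ∑ i, a i * b i) + (n : ℝ)⁻¹ * ∑ i, b i ^ 2 := by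
    simp only [Pi.add_apply, add_sq, sum_add_distrib, mul_assoc, ← mul_sum]; ring
  rw [hexp, add_sq, empNorm_sq, empNorm_sq]
  linarith

lemma empNorm_neg (a : Fin n → ℝ) : empNorm (-a) = empNorm a := by
  simp [empNorm]

lemma empNorm_sub_le (a b : Fin n → ℝ) : empNorm (a - b) ≤ empNorm a + empNorm b := by
  simpa [sub_eq_add_neg, empNorm_neg] using empNorm_add_le a (-b)

end EmpiricalNorm

section Design

variable (x : Fin n → Fin p → ℝ)

lemma predNorm_eq_empNorm (δ : Fin p → ℝ) : predNorm n p x δ = empNorm (fit x δ) := rfl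

lemma fit_add (β δ : Fin p → ℝ) : fit x (β + δ) = fit x β + fit x δ := by
  ext i; simp [fit, mul_add, sum_add_distrib]

lemma fit_sub (β δ : Fin p → ℝ) : fit x (β - δ) = fit x β - fit x δ := by
  ext i; simp [fit, mul_sub, sum_sub_distrib]

lemma corr_add (v w : Fin n → ℝ) : corr x (v + w) = corr x v + corr x w := by
  ext j; simp [corr, add_mul, sum_add_distrib, mul_add]

lemma sum_mul_corr (β : Fin p → ℝ) (w : Fin n → ℝ) :
    ∑ j, β j * corr x w j = (n : ℝ)⁻¹ * ∑ i, w i * fit x β i := by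
  simp only [corr, fit, mul_sum]
  rw [sum_comm]
  exact sum_congr rfl fun i _ => sum_congr rfl fun j _ => by ring

lemma Qls_add (y : Fin n → ℝ) (β δ : Fin p → ℝ) :
    Qls n p x y (β + δ) =
      Qls n p x y β - 2 * ∑ j, δ j * corr x (y - fit x β) j + predNorm n p x δ ^ 2 := by
  rw [sum_mul_corr, predNorm_eq_empNorm, empNorm_sq]
  have h : ∀ i, (y i - ∑ j, x i j * (β + δ) j) ^ 2 =
      (y i - fit x β i) ^ 2 - 2 * ((y - fit x β) i * fit x δ i) + fit x δ i ^ 2 := by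
    intro i; simp only [fit, Pi.add_apply, Pi.sub_apply, mul_add, sum_add_distrib]; ring
  simp only [Qls, h, sum_add_distrib, sum_sub_distrib, ← mul_sum, fit]
  ring

lemma empNorm_sub_fit_le (f : Fin n → ℝ) (β β0 : Fin p → ℝ) :
    empNorm (f - fit x β) ≤ empNorm (f - fit x β0) + predNorm n p x (β - β0) := by
  rw [show f - fit x β = (f - fit x β0) - fit x (β - β0) by rw [fit_sub]; abel]
  exact empNorm_sub_le _ _

end Design

section Support

lemma mem_suppF_restr {A : Finset (Fin p)} {δ : Fin p → ℝ} {j : Fin p} :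
    j ∈ suppF (restr A δ) ↔ j ∈ A ∧ δ j ≠ 0 := by
  by_cases hj : j ∈ A <;> simp [suppF, restr, hj]

lemma restr_compl_add_restr (A : Finset (Fin p)) (δ : Fin p → ℝ) :
    restr Aᶜ δ + restr A δ = δ := by
  ext j; by_cases hj : j ∈ A <;> simp [restr, hj]

lemma sum_sq_restr_compl_add_sum_sq_restr (A : Finset (Fin p)) (δ : Fin p → ℝ) :
    ∑ j, restr Aᶜ δ j ^ 2 + ∑ j, restr A δ j ^ 2 = ∑ j, δ j ^ 2 := by
  rw [← sum_add_distrib]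
  exact sum_congr rfl fun j _ => by by_cases hj : j ∈ A <;> simp [restr, hj]

lemma sum_sq_pos_of_ne_zero {δ : Fin p → ℝ} (hδ : δ ≠ 0) : 0 < ∑ j, δ j ^ 2 := by
  obtain ⟨j, hj⟩ := Function.ne_iff.mp hδ
  exact sum_pos' (fun i _ => sq_nonneg _) ⟨j, mem_univ j, pow_two_pos_of_ne_zero hj⟩

end Support

lemma add_sq_le_add_mul_add {a b P Q U V : ℝ} (ha : 0 ≤ a) (hb : 0 ≤ b)
    (hP : 0 ≤ P) (hQ : 0 ≤ Q) (hU : 0 ≤ U) (hV : 0 ≤ V)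
    (haPU : a ^ 2 ≤ P * U) (hbQV : b ^ 2 ≤ Q * V) :
    (a + b) ^ 2 ≤ (P + Q) * (U + V) := by
  nlinarith [sq_nonneg (P * V - Q * U), mul_nonneg ha hb, mul_nonneg hP hV, mul_nonneg hQ hU,
    mul_le_mul haPU hbQV (sq_nonneg b) (mul_nonneg hP hU), sq_nonneg (a * b)]

section SparseEigenvalue

variable (x : Fin n → Fin p → ℝ) (T : Finset (Fin p))

lemma predNorm_sq_le_mul_sum_sq (δ : Fin p → ℝ) :
    predNorm n p x δ ^ 2 ≤ ((n : ℝ)⁻¹ * ∑ i, ∑ j, x i j ^ 2) * ∑ j, δ j ^ 2 := by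
  rw [predNorm_eq_empNorm, empNorm_sq, mul_assoc, sum_mul]
  exact mul_le_mul_of_nonneg_left (sum_le_sum fun i _ => sum_mul_sq_le_sq_mul_sq _ _ _)
    (by positivity)

lemma bddAbove_phiRSE_set (m : ℕ) :
    BddAbove {r : ℝ | ∃ δ : Fin p → ℝ, δ ≠ 0 ∧ (suppF (restr Tᶜ δ)).card ≤ m ∧
      r = (predNorm n p x δ) ^ 2 / ∑ j, δ j ^ 2} := by
  refine ⟨(n : ℝ)⁻¹ * ∑ i, ∑ j, x i j ^ 2, ?_⟩
  rintro _ ⟨δ, hδ, -, rfl⟩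
  exact (div_le_iff₀ (sum_sq_pos_of_ne_zero hδ)).mpr (predNorm_sq_le_mul_sum_sq x δ)

lemma phiRSE_nonneg (m : ℕ) : 0 ≤ phiRSE n p x T m :=
  Real.sSup_nonneg (by rintro _ ⟨δ, -, -, rfl⟩; positivity)

lemma predNorm_sq_le_phiRSE_mul {m : ℕ} {δ : Fin p → ℝ}
    (hδ : (suppF (restr Tᶜ δ)).card ≤ m) :
    predNorm n p x δ ^ 2 ≤ phiRSE n p x T m * ∑ j, δ j ^ 2 := by
  rcases eq_or_ne δ 0 with rfl | hne
  · simp [predNorm]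
  · rw [← div_le_iff₀ (sum_sq_pos_of_ne_zero hne)]
    exact le_csSup (bddAbove_phiRSE_set x T m) ⟨δ, hne, hδ, rfl⟩

lemma phiRSE_le {m : ℕ} {K : ℝ} (hK : 0 ≤ K)
    (h : ∀ δ : Fin p → ℝ, (suppF (restr Tᶜ δ)).card ≤ m →
      predNorm n p x δ ^ 2 ≤ K * ∑ j, δ j ^ 2) :
    phiRSE n p x T m ≤ K := by
  refine Real.sSup_le ?_ hK
  rintro _ ⟨δ, hδ, hcard, rfl⟩
  exact (div_le_iff₀ (sum_sq_pos_of_ne_zero hδ)).mpr (h δ hcard)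

lemma phiRSE_mono : Monotone (phiRSE n p x T) := fun _ _ hm =>
  phiRSE_le x T (phiRSE_nonneg x T _) fun _ hδ => predNorm_sq_le_phiRSE_mul x T (hδ.trans hm)

lemma phiRSE_add_le (a b : ℕ) :
    phiRSE n p x T (a + b) ≤ phiRSE n p x T a + phiRSE n p x T b := by
  refine phiRSE_le x T (add_nonneg (phiRSE_nonneg x T a) (phiRSE_nonneg x T b)) fun δ hδ => ?_
  set A := suppF (restr Tᶜ δ)
  obtain ⟨C, hCA, hC⟩ := exists_subset_card_eq (min_le_right b A.card)
  have hu : (suppF (restr Tᶜ (restr Cᶜ δ))).card ≤ a := by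
    refine (card_le_card (t := A \ C) fun j hj => ?_).trans ?_
    · simp only [mem_sdiff, A, mem_suppF_restr, restr, mem_compl] at hj ⊢
      aesop
    · rw [card_sdiff_of_subset hCA, hC]; omega
  have hv : (suppF (restr Tᶜ (restr C δ))).card ≤ b := by
    refine (card_le_card (t := C) fun j hj => ?_).trans (hC ▸ min_le_left _ _)
    simp only [mem_suppF_restr, restr] at hj
    aesop
  have htri :
      predNorm n p x δ ≤ predNorm n p x (restr Cᶜ δ) + predNorm n p x (restr C δ) := by
    simpa only [predNorm_eq_empNorm, ← fit_add, restr_compl_add_restr] using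
      empNorm_add_le (fit x (restr Cᶜ δ)) (fit x (restr C δ))
  rw [← sum_sq_restr_compl_add_sum_sq_restr C δ]
  exact (pow_le_pow_left₀ (empNorm_nonneg _) htri 2).trans <|
    add_sq_le_add_mul_add (empNorm_nonneg _) (empNorm_nonneg _) (phiRSE_nonneg x T a)
      (phiRSE_nonneg x T b) (by positivity) (by positivity)
      (predNorm_sq_le_phiRSE_mul x T hu) (predNorm_sq_le_phiRSE_mul x T hv)

lemma phiRSE_mul_le {k : ℕ} (hk : 1 ≤ k) (m : ℕ) :
    phiRSE n p x T (k * m) ≤ k * phiRSE n p x T m := by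
  induction k, hk using Nat.le_induction with
  | base => simp
  | succ k _ ih =>
    rw [add_mul, one_mul, Nat.cast_succ, add_mul, one_mul]
    exact (phiRSE_add_le x T _ _).trans (by linarith)

lemma phiRSE_min_mul_le {k : ℕ} (hk : 1 ≤ k) (m : ℕ) :
    phiRSE n p x T (min (k * m) n) ≤ k * phiRSE n p x T (min m n) := by
  refine (phiRSE_mono x T ?_).trans (phiRSE_mul_le x T hk _)
  rcases le_total m n with h | h
  · rw [min_eq_left h]; exact min_le_left _ _
  · rw [min_eq_right h]; exact (min_le_right _ _).trans (Nat.le_mul_of_pos_left n hk)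

end SparseEigenvalue

section Optimality

variable (x : Fin n → Fin p → ℝ) (y : Fin n → ℝ)

lemma l1_add_single (β : Fin p → ℝ) (j : Fin p) (t : ℝ) :
    l1 (β + Pi.single j t) = l1 β - |β j| + |β j + t| := by
  simp only [l1, ← add_sum_erase _ _ (mem_univ j), Pi.add_apply, Pi.single_eq_same]
  rw [sum_congr rfl fun i hi => by rw [Pi.single_eq_of_ne (ne_of_mem_erase hi), add_zero]]
  ring

lemma sum_single_mul (j : Fin p) (t : ℝ) (v : Fin p → ℝ) :
    ∑ i, (Pi.single j t : Fin p → ℝ) i * v i = t * v j := by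
  simp [Pi.single_apply, ite_mul]

lemma predNorm_single_sq (j : Fin p) (t : ℝ) :
    predNorm n p x (Pi.single j t) ^ 2 = t ^ 2 * ((n : ℝ)⁻¹ * ∑ i, x i j ^ 2) := by
  simp only [predNorm_eq_empNorm, empNorm_sq, fit, mul_comm (x _ _), sum_single_mul, mul_pow,
    ← mul_sum]
  ring

theorem two_mul_abs_corr_eq_of_isLassoEstimator {lam : ℝ} (hlam : 0 ≤ lam) {βhat : Fin p → ℝ}
    (hβ : IsLassoEstimator n p x y lam βhat) {j : Fin p} (hj : βhat j ≠ 0) :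
    2 * |corr x (y - fit x βhat) j| = lam / n := by
  -- along the `j`-th coordinate the objective is, up to a constant, this function of `t`,
  -- which is differentiable at `0` because `βhat j ≠ 0`
  let ψ : ℝ → ℝ := fun t => -2 * t * corr x (y - fit x βhat) j +
    t ^ 2 * ((n : ℝ)⁻¹ * ∑ i, x i j ^ 2) + lam / n * |βhat j + t|
  have hmin : IsLocalMin ψ 0 := by
    refine IsMinOn.isLocalMin (fun t _ => ?_) Filter.univ_mem
    have h := hβ (βhat + Pi.single j t)
    rw [Qls_add, l1_add_single, predNorm_single_sq, sum_single_mul] at h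
    norm_num [ψ]
    linarith
  have habs : HasDerivAt (fun t => |βhat j + t|) (SignType.sign (βhat j) : ℝ) 0 :=
    HasDerivAt.comp_const_add (βhat j) 0 (f := fun t => |t|)
      (by rw [add_zero]; exact hasDerivAt_abs hj)
  have hderiv : HasDerivAt ψ
      (-2 * corr x (y - fit x βhat) j + lam / n * SignType.sign (βhat j)) 0 := by
    refine ((((hasDerivAt_id' 0).const_mul (-2)).mul_const (corr x (y - fit x βhat) j)).fun_add
      ((hasDerivAt_pow 2 0).mul_const ((n : ℝ)⁻¹ * ∑ i, x i j ^ 2))).fun_add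
      (habs.const_mul (lam / n)) |>.congr_deriv ?_
    norm_num
  have hzero := hmin.hasDerivAt_eq_zero hderiv
  have hsign : |(SignType.sign (βhat j) : ℝ)| = 1 := by
    rcases lt_or_gt_of_ne hj with h | h <;> simp [h]
  calc 2 * |corr x (y - fit x βhat) j| = |lam / n * SignType.sign (βhat j)| := by
        rw [← abs_two, ← abs_mul]; congr 1; linarith
    _ = lam / n := by rw [abs_mul, hsign, mul_one, abs_of_nonneg (by positivity)]

end Optimality

section Norms

lemma l1_nonneg (δ : Fin p → ℝ) : 0 ≤ l1 δ := sum_nonneg fun _ _ => abs_nonneg _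

lemma l1_restr_add_l1_restr_compl (T : Finset (Fin p)) (δ : Fin p → ℝ) :
    l1 (restr T δ) + l1 (restr Tᶜ δ) = l1 δ := by
  rw [l1, l1, l1, ← sum_add_distrib]
  exact sum_congr rfl fun j _ => by by_cases hj : j ∈ T <;> simp [restr, hj]

lemma l1_sub_l1_le {T : Finset (Fin p)} {β0 : Fin p → ℝ} (hβ0 : ∀ j ∉ T, β0 j = 0)
    (β : Fin p → ℝ) :
    l1 β0 - l1 β ≤ l1 (restr T (β - β0)) - l1 (restr Tᶜ (β - β0)) := by
  simp only [l1, ← sum_sub_distrib]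
  refine sum_le_sum fun j _ => ?_
  by_cases hj : j ∈ T
  · simpa [restr, hj, abs_sub_comm] using abs_sub_abs_le_abs_sub (β0 j) (β j)
  · simp [restr, hj, hβ0 j hj]

lemma sum_mul_le_mul_l1 {S : Fin p → ℝ} {μ : ℝ} (hS : ∀ j, |S j| ≤ μ)
    (δ : Fin p → ℝ) :
    ∑ j, S j * δ j ≤ μ * l1 δ := by
  rw [l1, mul_sum]
  refine sum_le_sum fun j _ => (le_abs_self _).trans ?_
  rw [abs_mul]
  exact mul_le_mul_of_nonneg_right (hS j) (abs_nonneg _)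

lemma abs_le_supNorm (S : Fin p → ℝ) (j : Fin p) : |S j| ≤ supNorm S :=
  le_ciSup (f := fun j => |S j|) (Set.finite_range _).bddAbove j

lemma two_mul_abs_corr_le {x : Fin n → Fin p → ℝ} {y f : Fin n → ℝ} {c lam : ℝ} (hn : 0 < n)
    (hc : 0 < c) (h : c * n * supNorm (fun j => (2 / n : ℝ) * ∑ i, (y i - f i) * x i j) ≤ lam)
    (j : Fin p) : 2 * |corr x (y - f) j| ≤ lam / (c * n) := by
  have hS : (2 / n : ℝ) * ∑ i, (y i - f i) * x i j = 2 * corr x (y - f) j := by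
    rw [div_eq_mul_inv, mul_assoc]; rfl
  rw [le_div_iff₀ (by positivity), ← abs_two, ← abs_mul, ← hS]
  nlinarith [abs_le_supNorm (fun j => (2 / n : ℝ) * ∑ i, (y i - f i) * x i j) j,
    mul_pos hc (Nat.cast_pos.mpr hn : (0 : ℝ) < n)]

end Norms

section Rate

variable (x : Fin n → Fin p → ℝ) (T : Finset (Fin p))

lemma kappaRE_mul_l1_restr_le {cbar : ℝ} {δ : Fin p → ℝ}
    (hcone : l1 (restr Tᶜ δ) ≤ cbar * l1 (restr T δ)) :
    kappaRE n p x T cbar * l1 (restr T δ) ≤ √T.card * predNorm n p x δ := by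
  have hrhs : 0 ≤ √T.card * predNorm n p x δ :=
    mul_nonneg (Real.sqrt_nonneg _) (Real.sqrt_nonneg _)
  rcases (l1_nonneg (restr T δ)).eq_or_lt with h | hpos
  · rwa [← h, mul_zero]
  have hδ : δ ≠ 0 := by rintro rfl; simp [l1, restr] at hpos
  have hbdd : BddBelow {r : ℝ | ∃ δ : Fin p → ℝ, δ ≠ 0 ∧
      l1 (restr Tᶜ δ) ≤ cbar * l1 (restr T δ) ∧
      r = Real.sqrt T.card * predNorm n p x δ / l1 (restr T δ)} := by
    refine ⟨0, ?_⟩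
    rintro _ ⟨δ, -, -, rfl⟩
    exact div_nonneg (mul_nonneg (Real.sqrt_nonneg _) (Real.sqrt_nonneg _)) (l1_nonneg _)
  rw [← le_div_iff₀ hpos]
  exact csInf_le hbdd ⟨δ, hδ, hcone, rfl⟩

variable {x T}
variable {y f : Fin n → ℝ} {lam : ℝ} {βhat : Fin p → ℝ}

lemma predNorm_sq_le_of_isLassoEstimator (hβ : IsLassoEstimator n p x y lam βhat)
    (β0 : Fin p → ℝ) :
    predNorm n p x (βhat - β0) ^ 2 ≤ 2 * ∑ j, (βhat - β0) j * corr x (y - f) j +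
      2 * empNorm (f - fit x β0) * predNorm n p x (βhat - β0) + lam / n * (l1 β0 - l1 βhat) := by
  have h := hβ β0
  have happrox := inv_mul_sum_mul_le_empNorm_mul (f - fit x β0) (fit x (βhat - β0))
  rw [← add_sub_cancel β0 βhat, Qls_add, add_sub_cancel,
    show y - fit x β0 = (y - f) + (f - fit x β0) by abel, corr_add] at h
  simp only [Pi.add_apply, mul_add, sum_add_distrib] at h
  rw [sum_mul_corr x (βhat - β0) (f - fit x β0)] at h
  rw [← predNorm_eq_empNorm] at happrox
  linarith

lemma predNorm_sq_le_l1_restr_of_isLassoEstimator {c : ℝ} (hlam : 0 ≤ lam) {β0 : Fin p → ℝ}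
    (hβ0 : ∀ j ∉ T, β0 j = 0) (hS : ∀ j, 2 * |corr x (y - f) j| ≤ lam / (c * n))
    (hβ : IsLassoEstimator n p x y lam βhat) :
    predNorm n p x (βhat - β0) ^ 2 ≤ lam / n * ((1 + 1 / c) * l1 (restr T (βhat - β0)) -
      (1 - 1 / c) * l1 (restr Tᶜ (βhat - β0))) +
      2 * empNorm (f - fit x β0) * predNorm n p x (βhat - β0) := by
  have hscore : 2 * ∑ j, (βhat - β0) j * corr x (y - f) j ≤
      lam / (c * n) * (l1 (restr T (βhat - β0)) + l1 (restr Tᶜ (βhat - β0))) := by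
    rw [l1_restr_add_l1_restr_compl, mul_sum]
    refine (sum_congr rfl fun j _ => by ring).trans_le (sum_mul_le_mul_l1
      (S := fun j => 2 * corr x (y - f) j) (fun j => by rw [abs_mul, abs_two]; exact hS j) _)
  have hl1 := mul_le_mul_of_nonneg_left (l1_sub_l1_le hβ0 βhat) (by positivity : 0 ≤ lam / n)
  have hsplit : ∀ t1 t2 : ℝ, lam / (c * n) * (t1 + t2) + lam / n * (t1 - t2) =
      lam / n * ((1 + 1 / c) * t1 - (1 - 1 / c) * t2) := fun _ _ => by ring
  linarith [predNorm_sq_le_of_isLassoEstimator (f := f) hβ β0,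
    hsplit (l1 (restr T (βhat - β0))) (l1 (restr Tᶜ (βhat - β0)))]

theorem predNorm_sub_le_of_isLassoEstimator {c : ℝ} (hc : 1 < c) (hlam : 0 ≤ lam)
    {β0 : Fin p → ℝ} (hβ0 : ∀ j ∉ T, β0 j = 0) (hκ : 0 < kappaRE n p x T ((c + 1) / (c - 1)))
    (hS : ∀ j, 2 * |corr x (y - f) j| ≤ lam / (c * n))
    (hβ : IsLassoEstimator n p x y lam βhat) :
    predNorm n p x (βhat - β0) ≤ (1 + 1 / c) * lam * √T.card / (n * kappaRE n p x T
      ((c + 1) / (c - 1))) + 2 * empNorm (f - fit x β0) := by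
  set κ := kappaRE n p x T ((c + 1) / (c - 1))
  set D := predNorm n p x (βhat - β0)
  set t1 := l1 (restr T (βhat - β0))
  set t2 := l1 (restr Tᶜ (βhat - β0))
  have hc0 : 0 < c := one_pos.trans hc
  have hc1 : 0 ≤ 1 - 1 / c := sub_nonneg.mpr ((div_le_one hc0).mpr hc.le)
  have hD : 0 ≤ D := empNorm_nonneg _
  -- inside the cone `κ` converts `t1` into `D`; outside it the penalty term is nonpositive
  have hpen : lam / n * ((1 + 1 / c) * t1 - (1 - 1 / c) * t2) ≤
      (1 + 1 / c) * lam * √T.card / (n * κ) * D := by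
    by_cases hcone : t2 ≤ (c + 1) / (c - 1) * t1
    · have ht2 : 0 ≤ (1 - 1 / c) * t2 := mul_nonneg hc1 (l1_nonneg _)
      calc lam / n * ((1 + 1 / c) * t1 - (1 - 1 / c) * t2)
          ≤ (1 + 1 / c) * lam / (n * κ) * (κ * t1) := by
            rw [show (1 + 1 / c) * lam / (n * κ) * (κ * t1) = lam / n * ((1 + 1 / c) * t1) by
              field_simp]
            exact mul_le_mul_of_nonneg_left (by linarith) (by positivity)
        _ ≤ (1 + 1 / c) * lam / (n * κ) * (√T.card * D) :=
            mul_le_mul_of_nonneg_left (kappaRE_mul_l1_restr_le x T hcone) (by positivity)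
        _ = (1 + 1 / c) * lam * √T.card / (n * κ) * D := by ring
    · have hid : (1 - 1 / c) * ((c + 1) / (c - 1)) = 1 + 1 / c := by
        have : c - 1 ≠ 0 := by linarith
        field_simp
      have : (1 + 1 / c) * t1 - (1 - 1 / c) * t2 ≤ 0 := by
        rw [← hid]
        nlinarith [mul_le_mul_of_nonneg_left (not_le.mp hcone).le hc1]
      exact (mul_nonpos_of_nonneg_of_nonpos (by positivity) this).trans (by positivity)
  have hR : 0 ≤ (1 + 1 / c) * lam * √T.card / (n * κ) + 2 * empNorm (f - fit x β0) :=
    add_nonneg (by positivity) (mul_nonneg zero_le_two (empNorm_nonneg _))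
  have hsq : D ^ 2 ≤ ((1 + 1 / c) * lam * √T.card / (n * κ) + 2 * empNorm (f - fit x β0)) * D := by
    nlinarith [predNorm_sq_le_l1_restr_of_isLassoEstimator hlam hβ0 hS hβ]
  nlinarith

end Rate

section Sparsity

variable {x : Fin n → Fin p → ℝ} {T : Finset (Fin p)}

lemma sum_sq_corr_le_phiRSE_mul (w : Fin n → ℝ) {A : Finset (Fin p)} {m : ℕ}
    (hA : A.card ≤ m) :
    ∑ j ∈ A, corr x w j ^ 2 ≤ phiRSE n p x T m * empNorm w ^ 2 := by
  set u := restr A (corr x w)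
  have hX : ∑ j ∈ A, corr x w j ^ 2 = ∑ j, u j * corr x w j := by
    simp [u, restr, ite_mul, sq, sum_ite_mem]
  have hXu : ∑ j ∈ A, corr x w j ^ 2 = ∑ j, u j ^ 2 := by
    simp [u, restr, sq, sum_ite_mem]
  have hsupp : (suppF (restr Tᶜ u)).card ≤ m := by
    refine (card_le_card fun j hj => ?_).trans hA
    by_contra hjA
    simp [mem_suppF_restr, u, restr, hjA] at hj
  have hdual : ∑ j ∈ A, corr x w j ^ 2 ≤ empNorm w * predNorm n p x u := by
    rw [hX, sum_mul_corr]
    exact inv_mul_sum_mul_le_empNorm_mul w (fit x u)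
  have hphi := predNorm_sq_le_phiRSE_mul x T hsupp
  rw [← hXu] at hphi
  set X := ∑ j ∈ A, corr x w j ^ 2
  have hP : 0 ≤ predNorm n p x u := Real.sqrt_nonneg _
  -- duality gives `X ≤ ‖w‖ ‖fit x u‖`, and `‖fit x u‖² ≤ φ X`, so `X² ≤ φ ‖w‖² X`
  by_contra! hlt
  have hXpos : 0 < X := (mul_nonneg (phiRSE_nonneg x T m) (sq_nonneg _)).trans_lt hlt
  nlinarith [mul_lt_mul_of_pos_right hlt hXpos, pow_le_pow_left₀ hXpos.le hdual 2,
    mul_le_mul_of_nonneg_left hphi (sq_nonneg (empNorm w))]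

variable {y f : Fin n → ℝ} {lam : ℝ} {βhat : Fin p → ℝ}

lemma lam_div_sub_le_two_mul_abs_corr (hlam : 0 ≤ lam) (hβ : IsLassoEstimator n p x y lam βhat)
    {j : Fin p} (hj : βhat j ≠ 0) :
    lam / n - 2 * |corr x (y - f) j| ≤ 2 * |corr x (f - fit x βhat) j| := by
  have h := two_mul_abs_corr_eq_of_isLassoEstimator x y hlam hβ hj
  rw [show y - fit x βhat = (y - f) + (f - fit x βhat) by abel, corr_add, Pi.add_apply] at h
  linarith [abs_add_le (corr x (y - f) j) (corr x (f - fit x βhat) j)]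

lemma card_mul_sq_le (hlam : 0 ≤ lam) {μ : ℝ} (hμ : ∀ j, 2 * |corr x (y - f) j| ≤ μ)
    (hμlam : μ ≤ lam / n) (hβ : IsLassoEstimator n p x y lam βhat) :
    (suppF βhat \ T).card * (lam / n - μ) ^ 2 ≤
      4 * phiRSE n p x T (suppF βhat \ T).card * empNorm (f - fit x βhat) ^ 2 := by
  have hterm : ∀ j ∈ suppF βhat \ T,
      (lam / n - μ) ^ 2 ≤ 4 * corr x (f - fit x βhat) j ^ 2 := by
    intro j hj
    have hβj : βhat j ≠ 0 := by simpa [suppF] using (mem_sdiff.mp hj).1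
    have := lam_div_sub_le_two_mul_abs_corr (f := f) hlam hβ hβj
    calc (lam / n - μ) ^ 2 ≤ (2 * |corr x (f - fit x βhat) j|) ^ 2 :=
          pow_le_pow_left₀ (by linarith) (by linarith [hμ j]) 2
      _ = 4 * corr x (f - fit x βhat) j ^ 2 := by rw [mul_pow, sq_abs]; norm_num
  calc ((suppF βhat \ T).card : ℝ) * (lam / n - μ) ^ 2
      = ∑ _j ∈ suppF βhat \ T, (lam / n - μ) ^ 2 := by rw [sum_const, nsmul_eq_mul]
    _ ≤ 4 * ∑ j ∈ suppF βhat \ T, corr x (f - fit x βhat) j ^ 2 := by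
        rw [mul_sum]; exact sum_le_sum hterm
    _ ≤ _ := by
        rw [mul_assoc]
        exact mul_le_mul_of_nonneg_left (sum_sq_corr_le_phiRSE_mul _ le_rfl) (by norm_num)

theorem card_supp_sdiff_le_of_isLassoEstimator (hn : 0 < n) {c : ℝ} (hc : 1 < c) (hlam : 0 < lam)
    (hT : T.Nonempty) {β0 : Fin p → ℝ} (hβ0 : ∀ j ∉ T, β0 j = 0)
    (hκ : 0 < kappaRE n p x T ((c + 1) / (c - 1)))
    (hS : ∀ j, 2 * |corr x (y - f) j| ≤ lam / (c * n))
    (hβ : IsLassoEstimator n p x y lam βhat) :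
    ((suppF βhat \ T).card : ℝ) ≤ T.card * phiRSE n p x T (suppF βhat \ T).card *
      (2 * ((c + 1) / (c - 1)) / kappaRE n p x T ((c + 1) / (c - 1)) +
        3 * ((c + 1) / (c - 1) + 1) * n * empNorm (f - fit x β0) / (lam * √T.card)) ^ 2 := by
  set κ := kappaRE n p x T ((c + 1) / (c - 1))
  set cs := empNorm (f - fit x β0)
  set φ := phiRSE n p x T (suppF βhat \ T).card
  set E := 2 * ((c + 1) / (c - 1)) / κ + 3 * ((c + 1) / (c - 1) + 1) * n * cs / (lam * √T.card)
  set R := (1 + 1 / c) * lam * √T.card / (n * κ) + 2 * cs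
  have hn' : (0 : ℝ) < n := Nat.cast_pos.mpr hn
  have hc0 : 0 < c := one_pos.trans hc
  have hs : 0 < √T.card := Real.sqrt_pos.mpr (Nat.cast_pos.mpr hT.card_pos)
  have hrate : predNorm n p x (βhat - β0) ≤ R :=
    predNorm_sub_le_of_isLassoEstimator hc hlam.le hβ0 hκ hS hβ
  have hresid : empNorm (f - fit x βhat) ≤ R + cs := by
    linarith [empNorm_sub_fit_le x f βhat β0]
  set a := lam / n - lam / (c * n)
  have ha : 0 < a := by
    simp only [a, sub_pos]
    exact div_lt_div_of_pos_left hlam hn' (by nlinarith)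
  have hcount := card_mul_sq_le (T := T) hlam.le hS (by linarith) hβ
  -- the constant `Ln` is exactly `(2 (R + c_s) / (a √s))²`
  have hiden : 2 * (R + cs) = a * (√T.card * E) := by
    have hc1 : c - 1 ≠ 0 := by linarith
    simp only [R, E, a]
    field_simp
    ring
  have hbound : (suppF βhat \ T).card * a ^ 2 ≤ (T.card * φ * E ^ 2) * a ^ 2 := by
    calc (suppF βhat \ T).card * a ^ 2 ≤ φ * (2 * empNorm (f - fit x βhat)) ^ 2 := by
          linarith [hcount]
      _ ≤ φ * (2 * (R + cs)) ^ 2 :=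
          mul_le_mul_of_nonneg_left (pow_le_pow_left₀ (mul_nonneg zero_le_two (empNorm_nonneg _))
            (by linarith) 2) (phiRSE_nonneg x T _)
      _ = (T.card * φ * E ^ 2) * a ^ 2 := by
          rw [hiden, mul_pow, mul_pow, Real.sq_sqrt (Nat.cast_nonneg _)]; ring
  exact le_of_mul_le_mul_right hbound (by positivity)

end Sparsity

lemma le_mul_apply_of_two_mul_mul_apply_lt {φ : ℕ → ℝ} (hmono : Monotone φ) (h0 : 0 ≤ φ 0)
    (hsub : ∀ k m, 1 ≤ k → φ (k * m) ≤ k * φ m) {K : ℝ} (hK : 0 ≤ K) {a m : ℕ}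
    (ha : (a : ℝ) ≤ K * φ a) (hm : 2 * (K * φ m) < m) : (a : ℝ) ≤ K * φ m := by
  rcases le_or_gt a m with ham | hma
  · exact ha.trans (mul_le_mul_of_nonneg_left (hmono ham) hK)
  have hm0 : 0 < m := by
    by_contra! h
    have : φ 0 ≤ φ m := hmono (Nat.zero_le m)
    have : (m : ℝ) = 0 := by exact_mod_cast Nat.le_zero.mp h
    nlinarith [mul_nonneg hK h0]
  set k := a / m + 1
  have hak : a ≤ k * m := by
    simp only [k, add_mul, one_mul]; exact (Nat.lt_div_mul_add hm0).le
  have hk2 : (k * m : ℝ) ≤ 2 * a := by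
    have := Nat.div_mul_le_self a m
    exact_mod_cast (show k * m ≤ 2 * a by simp only [k, add_mul, one_mul]; omega)
  have hchain : (a : ℝ) ≤ k * (K * φ m) := by
    calc (a : ℝ) ≤ K * φ (k * m) := ha.trans (mul_le_mul_of_nonneg_left (hmono hak) hK)
      _ ≤ K * (k * φ m) := mul_le_mul_of_nonneg_left (hsub k m (Nat.le_add_left 1 _)) hK
      _ = k * (K * φ m) := by ring
  have hk0 : (0 : ℝ) < k := by positivity
  nlinarith [mul_lt_mul_of_pos_left hm hk0]

lemma le_mul_csInf {R : Set ℝ} {a K : ℝ} (hK : 0 ≤ K) (hR : R.Nonempty)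
    (h : ∀ r ∈ R, a ≤ K * r) : a ≤ K * sInf R := by
  rw [← smul_eq_mul, ← Real.sInf_smul_of_nonneg hK]
  exact le_csInf hR.smul_set (by rintro _ ⟨r, hr, rfl⟩; exact h r hr)

end Lasso

open Lasso

theorem lasso_sparsity_bound_general
    (n p : ℕ) (hn : 0 < n)
    (x : Fin n → Fin p → ℝ) (y f : Fin n → ℝ)
    (β0 : Fin p → ℝ) (T : Finset (Fin p)) (hT : T = suppF β0)
    (s : ℕ) (hs : s = T.card) (hs1 : 1 ≤ s)
    (cs : ℝ) (hcs : cs = Real.sqrt ((n : ℝ)⁻¹ * ∑ i, (f i - ∑ j, x i j * β0 j) ^ 2))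
    (c : ℝ) (hc : 1 < c) (cbar : ℝ) (hcbar : cbar = (c + 1) / (c - 1))
    (hκ : 0 < kappaRE n p x T cbar)
    (S : Fin p → ℝ) (hS : S = fun j => (2 / n : ℝ) * ∑ i, (y i - f i) * x i j)
    (lam : ℝ) (hlam : 0 < lam) (hlamS : c * n * supNorm S ≤ lam)
    (βhat : Fin p → ℝ)
    (hβhat : ∀ β : Fin p → ℝ,
      Qls n p x y βhat + lam / n * l1 βhat ≤ Qls n p x y β + lam / n * l1 β)
    (mhat : ℕ) (hmhat : mhat = (suppF βhat \ T).card) (hmhatn : mhat ≤ n)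
    (Ln : ℝ) (hLn : Ln = (2 * cbar / kappaRE n p x T cbar +
      3 * (cbar + 1) * n * cs / (lam * Real.sqrt s)) ^ 2)
    (M : Set ℕ) (hM : M = {m : ℕ | (s : ℝ) * phiRSE n p x T (min m n) * (2 * Ln) < m}) :
    (∀ m ∈ M, (mhat : ℝ) ≤ s * phiRSE n p x T (min m n) * Ln) ∧
      (M.Nonempty →
        (mhat : ℝ) ≤ s * sInf {r : ℝ | ∃ m ∈ M, r = phiRSE n p x T (min m n)} * Ln) := by
  subst hcs hcbar hS hM
  have hβ0 : ∀ j ∉ T, β0 j = 0 := fun j hj => by simpa [hT, suppF] using hj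
  have hTne : T.Nonempty := card_pos.mp (hs ▸ hs1)
  have key : (mhat : ℝ) ≤ s * Ln * phiRSE n p x T mhat := by
    rw [mul_right_comm, hLn, hs, hmhat]
    exact card_supp_sdiff_le_of_isLassoEstimator hn hc hlam hTne hβ0 hκ
      (two_mul_abs_corr_le hn (one_pos.trans hc) hlamS) hβhat
  have hK : 0 ≤ (s : ℝ) * Ln := mul_nonneg (Nat.cast_nonneg s) (hLn ▸ sq_nonneg _)
  have part1 : ∀ m, (s : ℝ) * phiRSE n p x T (min m n) * (2 * Ln) < m →
      (mhat : ℝ) ≤ s * Ln * phiRSE n p x T (min m n) := fun m hm =>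
    le_mul_apply_of_two_mul_mul_apply_lt (φ := fun m => phiRSE n p x T (min m n))
      (fun _ _ h => phiRSE_mono x T (min_le_min_right n h)) (phiRSE_nonneg x T _)
      (fun k m hk => phiRSE_min_mul_le x T hk m) hK (by rwa [min_eq_left hmhatn])
      (by linarith)
  refine ⟨fun m hm => (part1 m hm).trans_eq (mul_right_comm _ _ _), fun ⟨m, hm⟩ => ?_⟩
  rw [mul_right_comm]
  exact le_mul_csInf hK ⟨_, m, hm, rfl⟩ (by rintro _ ⟨m, hm, rfl⟩; exact part1 m hm)

/-- Theorem 3.3: sparsity bound for lasso under data-driven penalty. -/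
theorem lasso_sparsity_bound
    (n p : ℕ) (hn : 0 < n) (hp : 0 < p)
    (x : Fin n → Fin p → ℝ) (y f : Fin n → ℝ)
    (hx : ∀ j, (n : ℝ)⁻¹ * ∑ i, x i j ^ 2 = 1)
    (β0 : Fin p → ℝ) (T : Finset (Fin p)) (hT : T = suppF β0)
    (s : ℕ) (hs : s = T.card) (hs1 : 1 ≤ s)
    (cs : ℝ) (hcs : cs = Real.sqrt ((n : ℝ)⁻¹ * ∑ i, (f i - ∑ j, x i j * β0 j) ^ 2))
    (c : ℝ) (hc : 1 < c) (cbar : ℝ) (hcbar : cbar = (c + 1) / (c - 1))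
    (hκ : 0 < kappaRE n p x T cbar)
    (S : Fin p → ℝ) (hS : S = fun j => (2 / n : ℝ) * ∑ i, (y i - f i) * x i j)
    (lam : ℝ) (hlam : 0 < lam) (hlamS : c * n * supNorm S ≤ lam)
    (βhat : Fin p → ℝ)
    (hβhat : ∀ β : Fin p → ℝ,
      Qls n p x y βhat + lam / n * l1 βhat ≤ Qls n p x y β + lam / n * l1 β)
    (mhat : ℕ) (hmhat : mhat = (suppF βhat \ T).card) (hmhatn : mhat ≤ n)
    (Ln : ℝ) (hLn : Ln = (2 * cbar / kappaRE n p x T cbar +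
      3 * (cbar + 1) * n * cs / (lam * Real.sqrt s)) ^ 2)
    (M : Set ℕ) (hM : M = {m : ℕ | (s : ℝ) * phiRSE n p x T (min m n) * (2 * Ln) < m}) :
    (∀ m ∈ M, (mhat : ℝ) ≤ s * phiRSE n p x T (min m n) * Ln) ∧
      (M.Nonempty →
        (mhat : ℝ) ≤ s * sInf {r : ℝ | ∃ m ∈ M, r = phiRSE n p x T (min m n)} * Ln) :=
  lasso_sparsity_bound_general n p hn x y f β0 T hT s hs hs1 cs hcs c hc cbar hcbar hκ S hS lam hlam
    hlamS βhat hβhat mhat hmhat hmhatn Ln hLn M hM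
end
end
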